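/- arXiv:1902.01128 — 2 statements merged into one kernel-verified Lean document; each statement's English description precedes it below -/
import Mathlib

section
/- Define q(λ) = W(exp(a + b/λ − 1)) / (W(exp(a + b/λ − 1)) + 1) for λ > 0, with a ∈ ℝ, b > 0, and W the principal Lambert W function. Then q is strictly decreasing on (0, ∞), with derivative dq/dλ = −b·q(λ)·(1−q(λ))²/λ². -/
/-!
Write `ω u = W (exp u)`. Taking logarithms in `W y * exp (W y) = y` shows that `ω` is a positive
inverse of the strictly increasing map `w ↦ w + log w` on `(0, ∞)`, so `ω` is continuous and,
by the inverse function rule, `ω' = ω / (ω + 1)`. The ratio `r = ω / (ω + 1)` then satisfies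
`r' = r (1 - r)²`, and `q λ = r (a + b / λ - 1)` gives the derivative by the chain rule. It is
negative because `0 < r < 1` and `b > 0`.
-/

open Real Set Filter

theorem add_log_eq_of_mul_exp_eq_exp {w u : ℝ} (hw : 0 < w) (h : w * exp w = exp u) :
    w + log w = u := by
  have := congrArg log h
  rwa [log_mul hw.ne' (exp_ne_zero _), log_exp, log_exp, add_comm] at this

theorem strictMonoOn_add_log : StrictMonoOn (fun w : ℝ => w + log w) (Ioi 0) :=
  fun _ hx _ _ hxy => add_lt_add hxy (strictMonoOn_log hx (mem_Ioi.2 (hx.trans hxy)) hxy)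

section AddLogInverse

variable {g : ℝ → ℝ}

theorem strictMono_of_add_log_eq (hg_pos : ∀ u, 0 < g u) (hg : ∀ u, g u + log (g u) = u) :
    StrictMono g :=
  fun u v huv => (strictMonoOn_add_log.lt_iff_lt (hg_pos u) (hg_pos v)).1 (by simpa [hg] using huv)

theorem range_eq_Ioi_of_add_log_eq (hg_pos : ∀ u, 0 < g u) (hg : ∀ u, g u + log (g u) = u) :
    range g = Ioi 0 := by
  refine (range_subset_iff.2 hg_pos).antisymm fun w hw => ⟨w + log w, ?_⟩
  exact strictMonoOn_add_log.injOn (hg_pos _) hw (hg _)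

theorem continuous_of_add_log_eq (hg_pos : ∀ u, 0 < g u) (hg : ∀ u, g u + log (g u) = u) :
    Continuous g := by
  refine continuous_iff_continuousAt.2 fun u => ?_
  refine continuousAt_of_monotoneOn_of_image_mem_nhds
    ((strictMono_of_add_log_eq hg_pos hg).monotone.monotoneOn univ) univ_mem ?_
  rw [image_univ, range_eq_Ioi_of_add_log_eq hg_pos hg]
  exact Ioi_mem_nhds (hg_pos u)

theorem hasDerivAt_of_add_log_eq (hg_pos : ∀ u, 0 < g u) (hg : ∀ u, g u + log (g u) = u)
    (u : ℝ) : HasDerivAt g (g u / (g u + 1)) u := by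
  have hf : HasDerivAt (fun w => w + log w) (1 + (g u)⁻¹) (g u) :=
    (hasDerivAt_id _).add (hasDerivAt_log (hg_pos u).ne')
  have h := hf.of_local_left_inverse (continuous_of_add_log_eq hg_pos hg).continuousAt
    (by have := hg_pos u; positivity) (Eventually.of_forall hg)
  refine h.congr_deriv ?_
  have := hg_pos u
  field_simp

theorem hasDerivAt_div_add_one_of_add_log_eq (hg_pos : ∀ u, 0 < g u)
    (hg : ∀ u, g u + log (g u) = u) (u : ℝ) :
    HasDerivAt (fun u => g u / (g u + 1))
      (g u / (g u + 1) * (1 - g u / (g u + 1)) ^ 2) u := by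
  have hg' := hasDerivAt_of_add_log_eq hg_pos hg u
  have hne : g u + 1 ≠ 0 := by have := hg_pos u; positivity
  refine (hg'.div (hg'.add_const 1) hne).congr_deriv ?_
  field_simp
  ring

end AddLogInverse

theorem div_add_one_mem_Ioo {w : ℝ} (hw : 0 < w) : w / (w + 1) ∈ Ioo 0 1 :=
  ⟨by positivity, (div_lt_one (by positivity)).2 (lt_add_one w)⟩

theorem q_lambda_strictly_decreasing (a b : ℝ) (hb : 0 < b)
    (W : ℝ → ℝ) (hW : ∀ y > 0, W y * Real.exp (W y) = y ∧ 0 < W y)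
    (q : ℝ → ℝ)
    (hq : ∀ lam > 0, q lam = W (Real.exp (a + b / lam - 1)) /
      (W (Real.exp (a + b / lam - 1)) + 1)) :
    StrictAntiOn q (Set.Ioi 0) ∧
    ∀ lam > 0, HasDerivAt q (-(b * q lam * (1 - q lam) ^ 2) / lam ^ 2) lam := by
  set ω : ℝ → ℝ := fun u => W (exp u)
  have hω_pos : ∀ u, 0 < ω u := fun u => (hW _ (exp_pos u)).2
  have hω : ∀ u, ω u + log (ω u) = u := fun u =>
    add_log_eq_of_mul_exp_eq_exp (hω_pos u) (hW _ (exp_pos u)).1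
  have hq_deriv : ∀ lam > 0, HasDerivAt q (-(b * q lam * (1 - q lam) ^ 2) / lam ^ 2) lam := by
    intro lam hlam
    have hinner : HasDerivAt (fun x => a + b / x - 1) (-b / lam ^ 2) lam := by
      simpa [div_eq_mul_inv] using
        ((hasDerivAt_inv hlam.ne').const_mul b).const_add a |>.sub_const 1
    have h := (hasDerivAt_div_add_one_of_add_log_eq hω_pos hω _).comp lam hinner
    rw [← hq lam hlam] at h
    exact (h.congr_of_eventuallyEq (eventually_gt_nhds hlam |>.mono hq)).congr_deriv (by ring)
  refine ⟨strictAntiOn_of_hasDerivWithinAt_neg (convex_Ioi 0)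
    (fun x hx => (hq_deriv x hx).continuousAt.continuousWithinAt)
    (fun x hx => (hq_deriv x (interior_subset hx)).hasDerivWithinAt) fun x hx => ?_, hq_deriv⟩
  rw [interior_Ioi] at hx
  obtain ⟨hq_pos, hq_lt_one⟩ : q x ∈ Ioo 0 1 := hq x hx ▸ div_add_one_mem_Ioo (hω_pos _)
  have : 0 < 1 - q x := sub_pos.2 hq_lt_one
  have hx' : (0 : ℝ) < x := hx
  exact div_neg_of_neg_of_pos (neg_neg_of_pos (by positivity)) (by positivity)
end

section
/- In the KKT analysis, the equivalence holds: for λ ≥ 0, the condition d/dq [λ D q c(q) − D q] = 0 at q ∈ (0,1) (with D > 0, b > 0, c(q) = -a/b − (1/b)(ln(1−q) − ln q)) holds if and only if λ > 0 and q = W(exp(a + b/λ − 1)) / (W(exp(a + b/λ − 1)) + 1). -/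
/-!
With the odds `x = q / (1 - q)`, the derivative of the objective at `q` is
`(D / b) * (λ * (1 - a + log x + x) - b)`, so stationarity says `λ > 0` and
`log x + x = a + b / λ - 1`, i.e. `x * exp x = exp (a + b / λ - 1)`. Since `x ↦ x * exp x` is
strictly increasing on `[0, ∞)`, this means `x = W (exp (a + b / λ - 1))`, and `q = x / (x + 1)`.
-/

open Real Set

lemma div_one_sub_eq_iff_eq_div_add_one {q x : ℝ} (hq : q ≠ 1) (hx : x ≠ -1) :
    q / (1 - q) = x ↔ q = x / (x + 1) := by
  have hq' : 1 - q ≠ 0 := sub_ne_zero.mpr (Ne.symm hq)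
  have hx' : x + 1 ≠ 0 := by contrapose! hx; linarith
  rw [div_eq_iff hq', eq_div_iff hx']
  constructor <;> intro h <;> linarith

lemma mul_eq_iff_pos_and_eq_div {l u b : ℝ} (hl : 0 ≤ l) (hb : b ≠ 0) :
    l * u = b ↔ 0 < l ∧ u = b / l := by
  constructor
  · intro h
    have hl0 : 0 < l := hl.lt_of_ne (by rintro rfl; exact hb (by simpa using h.symm))
    exact ⟨hl0, by rw [eq_div_iff hl0.ne', mul_comm, h]⟩
  · rintro ⟨hl0, rfl⟩
    field_simp

lemma Real.log_add_self_eq_iff {x s : ℝ} (hx : 0 < x) :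
    log x + x = s ↔ x * exp x = exp s := by
  rw [← exp_eq_exp, exp_add, exp_log hx]

lemma strictMonoOn_mul_exp : StrictMonoOn (fun x : ℝ => x * exp x) (Ici 0) :=
  fun _ hs _ _ hst => mul_lt_mul'' hst (exp_lt_exp.mpr hst) hs (exp_pos _).le

lemma mul_exp_eq_iff {x w : ℝ} (hx : 0 ≤ x) (hw : 0 ≤ w) :
    x * exp x = w * exp w ↔ x = w :=
  strictMonoOn_mul_exp.injOn.eq_iff hx hw

lemma hasDerivAt_log_sub_log_one_sub {q : ℝ} (hq0 : q ≠ 0) (hq1 : q ≠ 1) :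
    HasDerivAt (fun t => log t - log (1 - t)) (1 / (q * (1 - q))) q := by
  have h1q : 1 - q ≠ 0 := sub_ne_zero.mpr (Ne.symm hq1)
  have hlog : HasDerivAt (fun t => log (1 - t)) ((1 - q)⁻¹ * (-1)) q :=
    (hasDerivAt_log h1q).comp q ((hasDerivAt_id q).const_sub 1)
  refine ((hasDerivAt_log hq0).sub hlog).congr_deriv ?_
  field_simp
  ring

lemma hasDerivAt_kkt_objective {a b D lam q : ℝ} (hb : b ≠ 0) {c : ℝ → ℝ}
    (hc : ∀ p ∈ Ioo (0 : ℝ) 1, c p = -a / b - (1 / b) * (log (1 - p) - log p))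
    (hq : q ∈ Ioo (0 : ℝ) 1) :
    HasDerivAt (fun t => lam * (D * t * c t) - D * t)
      (D / b * (lam * (1 - a + log (q / (1 - q)) + q / (1 - q)) - b)) q := by
  have hq0 : q ≠ 0 := hq.1.ne'
  have h1q : 1 - q ≠ 0 := by linarith [hq.2]
  have hc_eq : c =ᶠ[nhds q] fun t => -a / b + (1 / b) * (log t - log (1 - t)) := by
    filter_upwards [isOpen_Ioo.mem_nhds hq] with p hp
    rw [hc p hp]
    ring
  have hc' : HasDerivAt c (1 / b * (1 / (q * (1 - q)))) q :=
    (((hasDerivAt_log_sub_log_one_sub hq0 hq.2.ne).const_mul (1 / b)).const_add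
      (-a / b)).congr_of_eventuallyEq hc_eq
  have hDt : HasDerivAt (fun t => D * t) D q := by simpa using (hasDerivAt_id q).const_mul D
  refine (((hDt.mul hc').const_mul lam).sub hDt).congr_deriv ?_
  rw [hc q hq, log_div hq0 h1q]
  field_simp
  ring

theorem kkt_stationarity_iff_lambertW (a b D lam : ℝ) (hb : 0 < b) (hD : 0 < D)
    (hlam : 0 ≤ lam)
    (W : ℝ → ℝ) (hW : ∀ y > 0, W y * Real.exp (W y) = y ∧ 0 < W y)
    (c : ℝ → ℝ)
    (hc : ∀ p ∈ Set.Ioo (0 : ℝ) 1,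
      c p = -a / b - (1 / b) * (Real.log (1 - p) - Real.log p)) :
    ∀ q ∈ Set.Ioo (0 : ℝ) 1,
      deriv (fun t => lam * (D * t * c t) - D * t) q = 0 ↔
      (0 < lam ∧
        q = W (Real.exp (a + b / lam - 1)) / (W (Real.exp (a + b / lam - 1)) + 1)) := by
  intro q hq
  have hx : 0 < q / (1 - q) := div_pos hq.1 (by linarith [hq.2])
  rw [(hasDerivAt_kkt_objective hb.ne' hc hq).deriv, mul_eq_zero, sub_eq_zero,
    or_iff_right (div_ne_zero hD.ne' hb.ne'), mul_eq_iff_pos_and_eq_div hlam hb.ne']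
  refine and_congr_right fun _ => ?_
  obtain ⟨hWeq, hWpos⟩ := hW _ (exp_pos (a + b / lam - 1))
  rw [← div_one_sub_eq_iff_eq_div_add_one hq.2.ne (by linarith),
    ← mul_exp_eq_iff hx.le hWpos.le, hWeq, ← Real.log_add_self_eq_iff hx]
  constructor <;> intro h <;> linarith
end
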